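/- (Buell, Proposition 3.20, as used in the paper) Let N be a positive integer that is not a perfect square. Suppose x = (√N + P)/Q and y = (√N + P')/Q' are two reduced quadratic surds for N, and suppose y = (a·x + b)/(c·x + d) for some integers a, b, c, d with a·d − b·c = 1. Then y occurs as a complete quotient in the simple continued fraction expansion of x (i.e. there exists k ≥ 0 with x_k = y, where x_0 = x and x_{j+1} = 1/(x_j − ⌊x_j⌋)), and likewise x occurs as a complete quotient in the simple continued fraction expansion of y. -/

import Mathlib

set_option maxHeartbeats 1000000

namespace B320

noncomputable def G (t : ℝ) : ℝ := 1 / (t - (⌊t⌋ : ℝ))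

lemma G_iter_succ (t : ℝ) (j : ℕ) : G^[j+1] t = G^[j] (G t) :=
  Function.iterate_succ_apply G j t

lemma G_int_add (z : ℝ) (t : ℤ) : G (z + (t:ℝ)) = G z := by
  unfold G
  rw [Int.floor_add_intCast]
  push_cast
  ring_nf

lemma G_eq_of_floor (y : ℝ) (n : ℤ) (h1 : (n:ℝ) < y) (h2 : y < (n:ℝ) + 1) :
    G y = 1 / (y - (n:ℝ)) := by
  unfold G
  rw [Int.floor_eq_iff.mpr ⟨le_of_lt h1, h2⟩]

variable (N : ℤ) (s : ℝ)

def Red (p q : ℤ) : Prop :=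
  0 < p ∧ 0 < q ∧ q ∣ p^2 - N ∧ (p:ℝ) < s ∧ s - (p:ℝ) < (q:ℝ) ∧ (q:ℝ) - s < (p:ℝ)

noncomputable def surd (p q : ℤ) : ℝ := (s + (p:ℝ)) / (q:ℝ)

noncomputable def stepD (pq : ℤ × ℤ) : ℤ × ℤ :=
  let a := ⌊surd s pq.1 pq.2⌋
  let p₁ := a * pq.2 - pq.1
  (p₁, (N - p₁^2) / pq.2)

lemma red_one_lt {p q : ℤ} (h : Red N s p q) : 1 < surd s p q := by
  obtain ⟨hp, hq, _, hps, h1, h2⟩ := h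
  have hq0 : (0:ℝ) < (q:ℝ) := by exact_mod_cast hq
  rw [surd, lt_div_iff₀ hq0]
  linarith

lemma red_irrational (hirr : Irrational s) {p q : ℤ} (h : Red N s p q) :
    Irrational (surd s p q) :=
  (hirr.add_intCast p).div_intCast (by exact_mod_cast h.2.1.ne')

lemma red_step (hs2 : s^2 = (N:ℝ)) (hirr : Irrational s) (hs1 : 1 ≤ s)
    {p q : ℤ} (h : Red N s p q) :
    Red N s (stepD N s (p,q)).1 (stepD N s (p,q)).2 ∧
    surd s (stepD N s (p,q)).1 (stepD N s (p,q)).2 = G (surd s p q) ∧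
    q * (stepD N s (p,q)).2 = N - (stepD N s (p,q)).1 ^ 2 ∧
    q ∣ p + (stepD N s (p,q)).1 := by
  obtain ⟨hp, hq, hdvd, hps, h1, h2⟩ := h
  set x := surd s p q with hxdef
  set a := ⌊x⌋ with hadef
  have hx1 : 1 < x := red_one_lt N s ⟨hp, hq, hdvd, hps, h1, h2⟩
  have hxirr : Irrational x := red_irrational N s hirr ⟨hp, hq, hdvd, hps, h1, h2⟩
  have ha1 : 1 ≤ a := Int.le_floor.mpr (by exact_mod_cast hx1.le)
  set p₁ : ℤ := a * q - p with hp₁def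
  have hq0 : (0:ℝ) < (q:ℝ) := by exact_mod_cast hq
  have hax : (a:ℝ) ≤ x := Int.floor_le x
  have hxa : x < (a:ℝ) + 1 := Int.lt_floor_add_one x
  have hane : (a:ℝ) ≠ x := (hxirr.ne_int a).symm
  have hfr : x - (a:ℝ) = (s - (p₁:ℝ)) / (q:ℝ) := by
    rw [hxdef, surd]
    push_cast [hp₁def]
    field_simp
    ring
  have hfrpos : 0 < x - (a:ℝ) := lt_of_le_of_ne (by linarith) (by
      intro hcon; exact hane (by linarith))
  have hfr0 : 0 < s - (p₁:ℝ) := by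
    have h' := mul_pos (hfr ▸ hfrpos) hq0
    rwa [div_mul_cancel₀ _ (ne_of_gt hq0)] at h'
  have hfr1 : s - (p₁:ℝ) < (q:ℝ) := by
    have h' : (s - (p₁:ℝ)) / (q:ℝ) < 1 := by rw [← hfr]; linarith
    exact (div_lt_one hq0).mp h'
  have hp₁pos : 0 < p₁ := by
    by_contra hcon
    push_neg at hcon
    have h3 : (q:ℝ) ≤ (a:ℝ) * q := by
      have : (1:ℝ) ≤ (a:ℝ) := by exact_mod_cast ha1
      nlinarith
    have h4 : (a:ℝ) * q = (p:ℝ) + (p₁:ℝ) := by push_cast [hp₁def]; ring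
    have h5 : (p₁:ℝ) ≤ 0 := by exact_mod_cast hcon
    nlinarith
  have hp₁s : (p₁:ℝ) < s := by linarith
  have hp₁sq : p₁^2 < N := by
    have hpr : (0:ℝ) < (p₁:ℝ) := by exact_mod_cast hp₁pos
    have : (p₁:ℝ)^2 < (N:ℝ) := by nlinarith
    exact_mod_cast this
  have hdvd1 : q ∣ N - p₁^2 := by
    have key : N - p₁^2 = -(p^2 - N) - q * (a * (p₁ - p)) := by rw [hp₁def]; ring
    rw [key]
    exact dvd_sub (dvd_neg.mpr hdvd) (Dvd.intro _ rfl)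
  set q₁ : ℤ := (N - p₁^2) / q with hq₁def
  have hqq₁ : q * q₁ = N - p₁^2 := Int.mul_ediv_cancel' hdvd1
  have hq₁pos : 0 < q₁ := by
    rcases lt_trichotomy q₁ 0 with hlt | heq | hgt
    · nlinarith
    · rw [heq] at hqq₁; omega
    · exact hgt
  have hq₁0 : (0:ℝ) < (q₁:ℝ) := by exact_mod_cast hq₁pos
  have hqq₁R : (q:ℝ) * (q₁:ℝ) = s^2 - (p₁:ℝ)^2 := by
    rw [hs2]; exact_mod_cast hqq₁
  have hqp₁ : (q:ℝ) < s + (p₁:ℝ) := by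
    have hint : q - p₁ ≤ p := by
      have he : q - p₁ = p - (a-1)*q := by rw [hp₁def]; ring
      nlinarith [mul_nonneg (by omega : (0:ℤ) ≤ a - 1) (le_of_lt hq)]
    have hr : ((q:ℝ) - (p₁:ℝ)) ≤ (p:ℝ) := by exact_mod_cast hint
    linarith
  have hred1 : s - (p₁:ℝ) < (q₁:ℝ) := by nlinarith
  have hred2 : (q₁:ℝ) - s < (p₁:ℝ) := by nlinarith
  have hdvd2 : q₁ ∣ p₁^2 - N := ⟨-q, by linarith [mul_comm q q₁]⟩
  have hstep : stepD N s (p,q) = (p₁, q₁) := rfl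
  rw [hstep]
  refine ⟨⟨hp₁pos, hq₁pos, hdvd2, hp₁s, hred1, hred2⟩, ?_, by simpa using hqq₁, ?_⟩
  · show surd s p₁ q₁ = G x
    rw [G, ← hadef, hfr, surd, one_div_div, div_eq_div_iff (ne_of_gt hq₁0) (ne_of_gt hfr0)]
    nlinarith
  · exact ⟨a, by rw [hp₁def]; ring⟩

lemma red_step_inj (hs2 : s^2 = (N:ℝ)) (hirr : Irrational s) (hs1 : 1 ≤ s)
    {p q p' q' : ℤ} (h : Red N s p q) (h' : Red N s p' q')
    (he : stepD N s (p,q) = stepD N s (p',q')) : (p,q) = (p',q') := by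
  obtain ⟨hr1, hsurd1, hqq1, hdv1⟩ := red_step N s hs2 hirr hs1 h
  obtain ⟨hr1', hsurd1', hqq1', hdv1'⟩ := red_step N s hs2 hirr hs1 h'
  set p₁ := (stepD N s (p,q)).1
  set q₁ := (stepD N s (p,q)).2
  have hp₁e : (stepD N s (p',q')).1 = p₁ := by rw [← he]
  have hq₁e : (stepD N s (p',q')).2 = q₁ := by rw [← he]
  have hq₁pos : 0 < q₁ := hr1.2.1
  have hqe : q = q' := by
    have hqq1'' : q' * q₁ = N - p₁^2 := by rw [← hp₁e, ← hq₁e]; exact hqq1'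
    have h0 : q * q₁ = q' * q₁ := by rw [hqq1, hqq1'']
    exact mul_right_cancel₀ (by omega) h0
  subst hqe
  have hdvdpp : q ∣ p - p' := by
    have hd := dvd_sub hdv1 (hp₁e ▸ hdv1')
    simpa using hd
  have habs : |p - p'| < q := by
    obtain ⟨hp0, hq0, _, hps, hh1, hh2⟩ := h
    obtain ⟨hp0', _, _, hps', hh1', hh2'⟩ := h'
    have : |((p:ℝ) - (p':ℝ))| < (q:ℝ) := abs_lt.mpr ⟨by linarith, by linarith⟩
    have h2 : |((p - p' : ℤ):ℝ)| < ((q:ℤ):ℝ) := by push_cast; convert this using 2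
    exact_mod_cast h2
  have : p - p' = 0 := Int.eq_zero_of_abs_lt_dvd hdvdpp habs
  have : p = p' := by omega
  simp [this]

lemma red_finite (hs2 : s^2 = (N:ℝ)) (hs1 : 1 ≤ s) :
    Set.Finite {pq : ℤ × ℤ | Red N s pq.1 pq.2} := by
  apply Set.Finite.subset (Set.finite_Icc ((1:ℤ),(1:ℤ)) (N, 2*N))
  rintro ⟨p,q⟩ ⟨hp, hq, _, hps, h1, h2⟩
  have hsN : s ≤ (N:ℝ) := by nlinarith
  have hpN : p ≤ N := by
    have : (p:ℝ) < (N:ℝ) := lt_of_lt_of_le hps hsN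
    exact_mod_cast this.le
  have hq2N : q ≤ 2*N := by
    have : (q:ℝ) < (N:ℝ) + (N:ℝ) := by linarith
    have h' : (q:ℝ) ≤ ((2*N : ℤ):ℝ) := by push_cast; linarith
    exact_mod_cast h'
  simp only [Set.mem_Icc, Prod.le_def]
  exact ⟨⟨hp, hq⟩, ⟨hpN, hq2N⟩⟩

lemma red_periodic (hs2 : s^2 = (N:ℝ)) (hirr : Irrational s) (hs1 : 1 ≤ s)
    {p q : ℤ} (h : Red N s p q) (X : ℕ → ℝ)
    (hX0 : X 0 = surd s p q) (hXr : ∀ k, X (k+1) = G (X k)) :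
    (∀ k, 1 < X k) ∧ (∃ T, 1 ≤ T ∧ ∀ k, X (k+T) = X k) := by
  set D : ℕ → ℤ × ℤ := fun k => (stepD N s)^[k] (p,q) with hD
  have hDsucc : ∀ k, D (k+1) = stepD N s (D k) := by
    intro k; simp [hD, Function.iterate_succ_apply']
  have horb : ∀ k, Red N s (D k).1 (D k).2 ∧ X k = surd s (D k).1 (D k).2 := by
    intro k
    induction k with
    | zero => exact ⟨h, hX0⟩
    | succ k ih =>
      have hred := red_step N s hs2 hirr hs1 ih.1
      rw [Prod.mk.eta] at hred
      rw [← hDsucc k] at hred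
      refine ⟨hred.1, ?_⟩
      rw [hXr k, ih.2, ← hred.2.1]
  have hX1 : ∀ k, 1 < X k := fun k => (horb k).2 ▸ red_one_lt N s (horb k).1
  refine ⟨hX1, ?_⟩
  have hmaps : Set.MapsTo D Set.univ {pq : ℤ × ℤ | Red N s pq.1 pq.2} :=
    fun k _ => (horb k).1
  obtain ⟨i, -, j, -, hij, hDe⟩ :=
    Set.infinite_univ.exists_ne_map_eq_of_mapsTo hmaps (red_finite N s hs2 hs1)
  have peel : ∀ i t, D i = D (i+t) → D 0 = D t := by
    intro i
    induction i with
    | zero => intro t ht; simpa using ht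
    | succ i ih =>
      intro t ht
      have h1 : stepD N s (D i) = stepD N s (D (i+t)) := by
        rw [← hDsucc, ← hDsucc]
        rw [show i + t + 1 = i + 1 + t by omega]
        exact ht
      rw [← Prod.mk.eta (p := D i), ← Prod.mk.eta (p := D (i+t))] at h1
      exact ih t (red_step_inj N s hs2 hirr hs1 (horb i).1 (horb (i+t)).1 h1)
  -- wlog i < j
  have main : ∀ i j : ℕ, i < j → D i = D j → ∃ T, 1 ≤ T ∧ ∀ k, X (k+T) = X k := by
    intro i j hlt hde
    refine ⟨j - i, by omega, ?_⟩
    have hDT : D 0 = D (j-i) := peel i (j-i) (by rw [show i + (j-i) = j by omega]; exact hde)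
    have hXT : X (j-i) = X 0 := by
      rw [(horb (j-i)).2, (horb 0).2, ← hDT]
    intro k
    induction k with
    | zero => simpa using hXT
    | succ k ih =>
      rw [show k + 1 + (j-i) = (k + (j-i)) + 1 by omega, hXr, hXr, ih]
  rcases hij.lt_or_gt with hlt | hlt
  · exact main i j hlt hDe
  · exact main j i hlt hDe.symm

lemma subA (z : ℝ) (hz : 1 < z) (t : ℤ) (ht : 0 ≤ t) :
    ∃ j, G^[j] (z + (t:ℝ)) = z ∨ G^[j] (z + (t:ℝ)) = G z := by
  rcases eq_or_lt_of_le ht with h0 | _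
  · exact ⟨0, Or.inl (by simp [← h0])⟩
  · exact ⟨1, Or.inr (by simpa using G_int_add z t)⟩

lemma lemA : ∀ n : ℕ, ∀ A B C D : ℤ, (A+B).toNat ≤ n →
    (A*D - B*C = 1 ∨ A*D - B*C = -1) → 1 ≤ C → 0 ≤ D → C ≤ A → D ≤ B →
    ∀ z : ℝ, 1 < z →
    ∃ j, G^[j] (((A:ℝ)*z+(B:ℝ))/((C:ℝ)*z+(D:ℝ))) = z ∨
         G^[j] (((A:ℝ)*z+(B:ℝ))/((C:ℝ)*z+(D:ℝ))) = G z := by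
  intro n
  induction n with
  | zero =>
    intro A B C D hm _ hC hD hCA hDB z _
    omega
  | succ n ih =>
    intro A B C D hm hdet hC hD hCA hDB z hz
    have hCz : (0:ℝ) < (C:ℝ)*z + D := by
      have h1 : (1:ℝ) ≤ (C:ℝ) := by exact_mod_cast hC
      have h2 : (0:ℝ) ≤ (D:ℝ) := by exact_mod_cast hD
      nlinarith
    set y : ℝ := ((A:ℝ)*z+(B:ℝ))/((C:ℝ)*z+(D:ℝ)) with hy
    rcases eq_or_lt_of_le hC with hC1 | hC2
    · -- C = 1
      have hC1' : C = 1 := hC1.symm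
      subst hC1'
      rcases hdet with he | he
      · -- A*D - B = 1, y = A - 1/(z+D)
        have hB : B = A*D - 1 := by omega
        have hD1 : 1 ≤ D := by nlinarith
        have hA2 : 2 ≤ A := by nlinarith
        have hzD : (1:ℝ) < z + (D:ℝ) := by
          have : (1:ℝ) ≤ (D:ℝ) := by exact_mod_cast hD1
          linarith
        have hyval : y = (A:ℝ) - 1/(z + (D:ℝ)) := by
          rw [hy, hB]
          push_cast
          field_simp
          ring
        have hinv : 0 < 1/(z+(D:ℝ)) ∧ 1/(z+(D:ℝ)) < 1 := by
          constructor
          · positivity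
          · rw [div_lt_one (by linarith)]; linarith
        have hfl : G y = (z + (D:ℝ))/(z + (D:ℝ) - 1) := by
          rw [G_eq_of_floor y (A-1) (by push_cast; rw [hyval]; linarith [hinv.2])
            (by push_cast; rw [hyval]; linarith [hinv.1])]
          have hfr1 : y - (((A-1:ℤ)):ℝ) = (z + (D:ℝ) - 1)/(z + (D:ℝ)) := by
            rw [hyval]; push_cast; field_simp; ring
          rw [hfr1, one_div_div]
        have hzD1 : (1:ℝ) < z + (D:ℝ) - 1 := by
          have : (1:ℝ) ≤ (D:ℝ) := by exact_mod_cast hD1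
          linarith
        have hfl2 : G (G y) = z + ((D - 1 : ℤ):ℝ) := by
          rw [hfl]
          have hlow : ((1:ℤ):ℝ) < (z + (D:ℝ))/(z + (D:ℝ) - 1) := by
            rw [lt_div_iff₀ (by linarith)]; push_cast; linarith
          have hhigh : (z + (D:ℝ))/(z + (D:ℝ) - 1) < ((1:ℤ):ℝ) + 1 := by
            rw [div_lt_iff₀ (by linarith)]; push_cast; linarith
          rw [G_eq_of_floor _ 1 hlow hhigh]
          have hfr2 : (z + (D:ℝ))/(z + (D:ℝ) - 1) - ((1:ℤ):ℝ) = 1/(z + (D:ℝ) - 1) := by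
            push_cast; field_simp; ring
          rw [hfr2, one_div_one_div]
          push_cast; ring
        obtain ⟨j, hj⟩ := subA z hz (D-1) (by omega)
        refine ⟨j+2, ?_⟩
        rw [G_iter_succ, G_iter_succ, hfl2]
        exact hj
      · -- A*D - B = -1, y = A + 1/(z+D)
        have hB : B = A*D + 1 := by omega
        have hzD : (1:ℝ) < z + (D:ℝ) := by
          have : (0:ℝ) ≤ (D:ℝ) := by exact_mod_cast hD
          linarith
        have hyval : y = (A:ℝ) + 1/(z + (D:ℝ)) := by
          rw [hy, hB]
          push_cast
          field_simp
          ring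
        have hinv : 0 < 1/(z+(D:ℝ)) ∧ 1/(z+(D:ℝ)) < 1 := by
          constructor
          · positivity
          · rw [div_lt_one (by linarith)]; linarith
        have hfl : G y = z + (D:ℝ) := by
          rw [G_eq_of_floor y A (by rw [hyval]; linarith [hinv.1])
            (by rw [hyval]; linarith [hinv.2])]
          have hfr1 : y - (A:ℝ) = 1/(z + (D:ℝ)) := by rw [hyval]; ring
          rw [hfr1, one_div_one_div]
        obtain ⟨j, hj⟩ := subA z hz D hD
        refine ⟨j+1, ?_⟩
        rw [G_iter_succ, hfl]
        exact hj
    · -- C ≥ 2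
      have hAC : C < A := by
        rcases eq_or_lt_of_le hCA with h | h
        · exfalso
          have hdvd : A ∣ 1 := by
            rcases hdet with he | he
            · exact ⟨D - B, by rw [← h] at he ⊢; linarith⟩
            · exact ⟨B - D, by rw [← h] at he ⊢; linarith⟩
          have := Int.le_of_dvd one_pos hdvd
          omega
        · exact h
      have hD1 : 1 ≤ D := by
        rcases eq_or_lt_of_le hD with h | h
        · exfalso
          have hdvd : C ∣ 1 := by
            rcases hdet with he | he
            · exact ⟨-B, by rw [← h] at he; linarith⟩
            · exact ⟨B, by rw [← h] at he; linarith⟩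
          have := Int.le_of_dvd one_pos hdvd
          omega
        · exact h
      set a : ℤ := (A-1) / C with ha
      have hmod := Int.mul_ediv_add_emod (A-1) C
      have hmodnn := Int.emod_nonneg (A-1) (by omega : C ≠ 0)
      have hmodlt := Int.emod_lt_of_pos (A-1) (by omega : 0 < C)
      have hac : a*C = C*((A-1)/C) := by rw [ha]; ring
      have hbound1 : 1 ≤ A - a*C := by omega
      have hbound2 : A - a*C ≤ C := by omega
      have ha1 : 1 ≤ a := by
        by_contra hcon
        push_neg at hcon
        have h0 : a*C ≤ 0 := mul_nonpos_of_nonpos_of_nonneg (by omega) (by omega)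
        omega
      -- bounds on B - a*D
      have hkey : C*(B - a*D) = D*(A - a*C) - (A*D - B*C) := by ring
      have hbound3 : 0 ≤ B - a*D := by
        by_contra hcon
        push_neg at hcon
        have h1 : C*(B - a*D) ≤ C*(-1) := by
          apply mul_le_mul_of_nonneg_left (by omega) (by omega)
        have h2 : D*1 ≤ D*(A - a*C) := by
          apply mul_le_mul_of_nonneg_left hbound1 (by omega)
        rcases hdet with he | he <;> omega
      have hbound4 : B - a*D ≤ D := by
        by_contra hcon
        push_neg at hcon
        have h1 : C*(D+1) ≤ C*(B - a*D) := by
          apply mul_le_mul_of_nonneg_left (by omega) (by omega)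
        have h2 : D*(A - a*C) ≤ D*C := by
          apply mul_le_mul_of_nonneg_left hbound2 (by omega)
        rcases hdet with he | he <;> nlinarith [hkey]
      -- floor of y is a, G y = (Cz+D)/((A-aC)z+(B-aD))
      have hnum : (0:ℝ) < ((A - a*C : ℤ):ℝ)*z + ((B - a*D : ℤ):ℝ) := by
        have h1 : (1:ℝ) ≤ ((A - a*C : ℤ):ℝ) := by exact_mod_cast hbound1
        have h2 : (0:ℝ) ≤ ((B - a*D : ℤ):ℝ) := by exact_mod_cast hbound3
        nlinarith
      have hylow : (a:ℝ) < y := by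
        rw [hy, lt_div_iff₀ hCz]
        push_cast at hnum ⊢
        nlinarith
      have hyhigh : y < (a:ℝ) + 1 := by
        rw [hy, div_lt_iff₀ hCz]
        -- ((A-aC)-C) z + ((B-aD)-D) < 0
        have hc1 : A - a*C - C ≤ 0 := by omega
        have hc2 : B - a*D - D ≤ 0 := by omega
        have hne : ¬(A - a*C - C = 0 ∧ B - a*D - D = 0) := by
          rintro ⟨e1, e2⟩
          have : C*(B-a*D) - D*(A-a*C) = 0 := by
            have hb : B - a*D = D := by omega
            have hab : A - a*C = C := by omega
            rw [hb, hab]; ring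
          rcases hdet with he | he <;> nlinarith [hkey]
        rcases eq_or_lt_of_le hc1 with h1 | h1
        · have h2 : B - a*D - D ≤ -1 := by
            rcases eq_or_lt_of_le hc2 with h2' | h2'
            · exact absurd ⟨h1, h2'⟩ hne
            · omega
          have h1' : (A:ℝ) - (a:ℝ)*(C:ℝ) - (C:ℝ) = 0 := by exact_mod_cast (by omega : ((A - a*C - C : ℤ)) = 0)
          have h2' : ((B:ℝ) - (a:ℝ)*(D:ℝ)) - (D:ℝ) ≤ -1 := by
            have : ((B - a*D - D : ℤ):ℝ) ≤ -1 := by exact_mod_cast h2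
            push_cast at this; linarith
          nlinarith
        · have h1' : (A:ℝ) - (a:ℝ)*(C:ℝ) - (C:ℝ) ≤ -1 := by
            have : ((A - a*C - C : ℤ):ℝ) ≤ -1 := by exact_mod_cast (by omega : A - a*C - C ≤ -1)
            push_cast at this; linarith
          have h2' : ((B:ℝ) - (a:ℝ)*(D:ℝ)) - (D:ℝ) ≤ 0 := by
            have : ((B - a*D - D : ℤ):ℝ) ≤ 0 := by exact_mod_cast hc2
            push_cast at this; linarith
          nlinarith
      have hGy : G y = (((C:ℝ))*z+(D:ℝ))/(((A-a*C : ℤ):ℝ)*z+((B-a*D : ℤ):ℝ)) := by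
        have hfr : y - (a:ℝ) = (((A-a*C:ℤ):ℝ)*z + ((B-a*D:ℤ):ℝ))/((C:ℝ)*z+(D:ℝ)) := by
          rw [hy]
          push_cast
          field_simp
          ring
        rw [G_eq_of_floor y a hylow hyhigh, hfr, one_div_div]
      obtain ⟨j, hj⟩ := ih C D (A - a*C) (B - a*D) (by omega)
        (by rcases hdet with he | he
            · right; linarith [hkey]
            · left; linarith [hkey])
        hbound1 hbound3 hbound2 hbound4 z hz
      refine ⟨j+1, ?_⟩
      rw [G_iter_succ, hGy]
      exact hj

def cnv (a : ℕ → ℤ) : ℕ → (ℤ × ℤ) × (ℤ × ℤ)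
  | 0 => ((1,0),(0,1))
  | n+1 =>
    let r := cnv a n
    ((r.1.1 * a n + r.1.2, r.1.1), (r.2.1 * a n + r.2.2, r.2.1))

lemma cnv_succ (a : ℕ → ℤ) (n : ℕ) :
    cnv a (n+1) = (((cnv a n).1.1 * a n + (cnv a n).1.2, (cnv a n).1.1),
      ((cnv a n).2.1 * a n + (cnv a n).2.2, (cnv a n).2.1)) := rfl

section CNV
variable (a : ℕ → ℤ) (ha : ∀ n, 1 ≤ a n)

include ha

lemma cnv_nonneg : ∀ n : ℕ, 0 ≤ (cnv a n).2.1 ∧ 0 ≤ (cnv a n).2.2 := by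
  intro n
  induction n with
  | zero => simp [cnv]
  | succ n ih =>
    rw [cnv_succ]
    refine ⟨?_, ih.1⟩
    have := ha n
    have h1 : 0 ≤ (cnv a n).2.1 * a n := mul_nonneg ih.1 (by omega)
    simp only []
    omega

lemma cnv_q_pos : ∀ n : ℕ, 1 ≤ (cnv a (n+1)).2.1 := by
  intro n
  induction n with
  | zero => rw [cnv_succ]; simp [cnv]
  | succ n ih =>
    rw [cnv_succ a (n+1)]
    have h2 := (cnv_nonneg a ha (n+1)).2
    have h1 : (cnv a (n+1)).2.1 * 1 ≤ (cnv a (n+1)).2.1 * a (n+1) :=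
      mul_le_mul_of_nonneg_left (ha (n+1)) (by omega)
    simp only []
    omega

lemma cnv_q_growth : ∀ n : ℕ, (n : ℤ) ≤ (cnv a (n+1)).2.1 := by
  intro n
  induction n with
  | zero => rw [cnv_succ]; simp [cnv]
  | succ n ih =>
    rw [cnv_succ a (n+1)]
    have h2 : 1 ≤ (cnv a (n+1)).2.1 := cnv_q_pos a ha n
    have h1 : (cnv a (n+1)).2.1 * 1 ≤ (cnv a (n+1)).2.1 * a (n+1) :=
      mul_le_mul_of_nonneg_left (ha (n+1)) (by omega)
    have h4 : (cnv a (n+1)).2.2 = (cnv a n).2.1 := by rw [cnv_succ]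
    rcases Nat.eq_zero_or_pos n with h0 | h0
    · subst h0
      simp only [cnv, Nat.cast_ofNat, Nat.cast_one]
      push_cast
      nlinarith [ha 1]
    · have h5 : 1 ≤ (cnv a n).2.1 := by
        obtain ⟨m, hm⟩ := Nat.exists_eq_succ_of_ne_zero (by omega : n ≠ 0)
        rw [hm]; exact cnv_q_pos a ha m
      simp only []
      push_cast
      omega

lemma cnv_det : ∀ n : ℕ, (cnv a n).1.1 * (cnv a n).2.2 - (cnv a n).1.2 * (cnv a n).2.1 = (-1)^n := by
  intro n
  induction n with
  | zero => simp [cnv]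
  | succ n ih =>
    rw [cnv_succ, pow_succ]
    simp only []
    nlinarith [ih]

end CNV

lemma one_div_eq_of_G (X : ℕ → ℝ) (hXr : ∀ k : ℕ, X (k+1) = G (X k))
    (hX1 : ∀ k, 1 < X k) (n : ℕ) :
    X n * X (n+1) = (⌊X n⌋ : ℝ) * X (n+1) + 1 := by
  have h := hXr n
  have hne : X n - (⌊X n⌋:ℝ) ≠ 0 := by
    intro h0
    rw [G, h0] at h
    simp at h
    linarith [hX1 (n+1), h]
  rw [G] at h
  have : X (n+1) * (X n - (⌊X n⌋:ℝ)) = 1 := by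
    rw [h, one_div, inv_mul_cancel₀ hne]
  nlinarith [this]

lemma common_pos (x y : ℝ) (X : ℕ → ℝ) (hX0 : X 0 = x) (hXr : ∀ k : ℕ, X (k+1) = G (X k))
    (hX1 : ∀ k, 1 < X k)
    (aa bb cc dd : ℤ) (hdet : aa*dd - bb*cc = 1) (hy : 1 < y)
    (hpos : 0 < (cc:ℝ)*x + dd)
    (hm : y = ((aa:ℝ)*x + bb)/((cc:ℝ)*x + dd)) :
    ∃ j n, G^[j] y = X n := by
  classical
  set f : ℕ → ℤ := fun n => ⌊X n⌋ with hf
  have haf : ∀ n, 1 ≤ f n := fun n => Int.le_floor.mpr (by exact_mod_cast (hX1 n).le)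
  -- convergent components
  set p : ℕ → ℤ := fun n => (cnv f n).1.1 with hp
  set ps : ℕ → ℤ := fun n => (cnv f n).1.2 with hps
  set q : ℕ → ℤ := fun n => (cnv f n).2.1 with hq
  set qs : ℕ → ℤ := fun n => (cnv f n).2.2 with hqs
  have hrec : ∀ n : ℕ, p (n+1) = p n * f n + ps n ∧ ps (n+1) = p n ∧
      q (n+1) = q n * f n + qs n ∧ qs (n+1) = q n := by
    intro n
    exact ⟨rfl, rfl, rfl, rfl⟩
  have hqnn : ∀ n, 0 ≤ q n ∧ 0 ≤ qs n := fun n => cnv_nonneg f haf n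
  have hq1 : ∀ n : ℕ, 1 ≤ q (n+1) := fun n => cnv_q_pos f haf n
  have hqg : ∀ n : ℕ, (n:ℤ) ≤ q (n+1) := fun n => cnv_q_growth f haf n
  have hdetn : ∀ n : ℕ, p n * qs n - ps n * q n = (-1)^n := fun n => cnv_det f haf n
  -- denominators positive
  have hden : ∀ n : ℕ, 0 < (q n : ℝ) * X n + (qs n : ℝ) := by
    intro n
    cases n with
    | zero => simp [hq, hqs, cnv]
    | succ n =>
      have h1 : (1:ℝ) ≤ (q (n+1) : ℝ) := by exact_mod_cast hq1 n
      have h2 : (0:ℝ) ≤ (qs (n+1) : ℝ) := by exact_mod_cast (hqnn (n+1)).2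
      nlinarith [hX1 (n+1)]
  -- the fundamental identity
  have hiden : ∀ n : ℕ, x = ((p n : ℝ) * X n + (ps n : ℝ)) / ((q n : ℝ) * X n + (qs n : ℝ)) := by
    intro n
    induction n with
    | zero => simp [hp, hps, hq, hqs, cnv, hX0]
    | succ n ih =>
      rw [ih]
      rw [div_eq_div_iff (ne_of_gt (hden n)) (ne_of_gt (hden (n+1)))]
      obtain ⟨e1, e2, e3, e4⟩ := hrec n
      rw [e1, e2, e3, e4]
      have hprod := one_div_eq_of_G X hXr hX1 n
      push_cast
      linear_combination ((p n : ℝ) * (qs n : ℝ) - (ps n : ℝ) * (q n : ℝ)) * hprod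
  -- bound
  have hbnd : ∀ n : ℕ, ∀ u v : ℤ, (q (n+1) : ℝ) * ((u:ℝ)*x + (v:ℝ)) - |(u:ℝ)|
      ≤ ((u * p (n+1) + v * q (n+1) : ℤ) : ℝ) := by
    intro n u v
    set m := n + 1 with hmdef
    have hir := hiden m
    have hdm := hden m
    have hxden : x * ((q m : ℝ) * X m + (qs m : ℝ)) = (p m : ℝ) * X m + (ps m : ℝ) := by
      rw [hir]; exact div_mul_cancel₀ _ hdm.ne'
    have hkey2 : ((p m:ℝ) - x*(q m:ℝ)) * ((q m:ℝ)*X m + (qs m:ℝ)) = ((-1:ℝ))^m := by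
      have hdet' : (p m : ℝ) * (qs m : ℝ) - (ps m : ℝ) * (q m : ℝ) = ((-1:ℝ))^m := by
        exact_mod_cast congrArg (fun t : ℤ => (t:ℝ)) (hdetn m)
      linear_combination (-(q m : ℝ)) * hxden + hdet'
    have hden1 : (1:ℝ) ≤ (q m:ℝ)*X m + (qs m:ℝ) := by
      have h1 : (1:ℝ) ≤ (q m : ℝ) := by exact_mod_cast hq1 n
      have h2 : (0:ℝ) ≤ (qs m : ℝ) := by exact_mod_cast (hqnn m).2
      nlinarith [hX1 m]
    have habs : |(p m:ℝ) - x*(q m:ℝ)| ≤ 1 := by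
      have heq1 : |(p m:ℝ) - x*(q m:ℝ)| * ((q m:ℝ)*X m + (qs m:ℝ)) = 1 := by
        have := congrArg abs hkey2
        rwa [abs_mul, abs_of_pos hdm, abs_pow, abs_neg, abs_one, one_pow] at this
      nlinarith [abs_nonneg ((p m:ℝ) - x*(q m:ℝ))]
    have habs2 : |(u:ℝ)*((p m:ℝ) - x*(q m:ℝ))| ≤ |(u:ℝ)| := by
      rw [abs_mul]
      exact mul_le_of_le_one_right (abs_nonneg _) habs
    have h5 : -|(u:ℝ)| ≤ (u:ℝ)*((p m:ℝ) - x*(q m:ℝ)) :=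
      le_trans (neg_le_neg habs2) (neg_abs_le _)
    have hringid : ((u * p m + v * q m : ℤ):ℝ)
        = (q m:ℝ)*((u:ℝ)*x+(v:ℝ)) + (u:ℝ)*((p m:ℝ) - x*(q m:ℝ)) := by
      push_cast; ring
    rw [hringid]
    linarith
  -- signs
  have hcd0 : ((cc:ℝ)*x + dd) ≠ 0 := ne_of_gt hpos
  have hy2 : y * ((cc:ℝ)*x+dd) = (aa:ℝ)*x + bb := by
    rw [hm]; exact div_mul_cancel₀ _ hcd0
  have hsub : 0 < ((aa:ℝ)-(cc:ℝ))*x + ((bb:ℝ)-(dd:ℝ)) := by nlinarith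
  set ε : ℝ := min ((cc:ℝ)*x + (dd:ℝ)) (((aa:ℝ)-(cc:ℝ))*x + ((bb:ℝ)-(dd:ℝ))) with hε
  have hε0 : 0 < ε := lt_min hpos hsub
  set M : ℝ := max |(cc:ℝ)| |(aa:ℝ)-(cc:ℝ)| with hM
  have hM0 : 0 ≤ M := le_trans (abs_nonneg _) (le_max_left _ _)
  obtain ⟨K, hK⟩ := exists_nat_gt ((1+M)/ε)
  have hgen : ∀ m : ℕ, K ≤ m → (1 ≤ cc * p (m+1) + dd * q (m+1)) ∧
      (1 ≤ (aa - cc) * p (m+1) + (bb - dd) * q (m+1)) := by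
    intro m hKm
    have hqm : ((K:ℝ)) ≤ (q (m+1) : ℝ) := by
      have h1 := hqg m
      have h2 : (K:ℤ) ≤ (m:ℤ) := by exact_mod_cast hKm
      have := le_trans h2 h1
      exact_mod_cast this
    have hqε : 1 + M < (q (m+1):ℝ) * ε := by
      have h3 : (1+M)/ε < (q (m+1):ℝ) := lt_of_lt_of_le hK hqm
      calc 1 + M = ((1+M)/ε) * ε := by field_simp
        _ < _ := mul_lt_mul_of_pos_right h3 hε0
    have hq0 : (0:ℝ) ≤ (q (m+1):ℝ) := by exact_mod_cast (hqnn (m+1)).1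
    constructor
    · have hb := hbnd m cc dd
      have hεle : ε ≤ (cc:ℝ)*x + (dd:ℝ) := min_le_left _ _
      have hMle : |(cc:ℝ)| ≤ M := le_max_left _ _
      have hr : (1:ℝ) < ((cc * p (m+1) + dd * q (m+1) : ℤ):ℝ) := by
        nlinarith [mul_le_mul_of_nonneg_left hεle hq0]
      have : (1:ℤ) < cc * p (m+1) + dd * q (m+1) := by exact_mod_cast hr
      omega
    · have hb := hbnd m (aa-cc) (bb-dd)
      have hεle : ε ≤ ((aa:ℝ)-(cc:ℝ))*x + ((bb:ℝ)-(dd:ℝ)) := min_le_right _ _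
      have hMle : |(aa:ℝ)-(cc:ℝ)| ≤ M := le_max_right _ _
      have hr : (1:ℝ) < (((aa-cc) * p (m+1) + (bb-dd) * q (m+1) : ℤ):ℝ) := by
        push_cast at hb ⊢
        nlinarith [mul_le_mul_of_nonneg_left hεle hq0]
      have : (1:ℤ) < (aa-cc) * p (m+1) + (bb-dd) * q (m+1) := by exact_mod_cast hr
      omega
  set n : ℕ := K + 2 with hn
  set A : ℤ := aa * p n + bb * q n with hA
  set B : ℤ := aa * ps n + bb * qs n with hB
  set C : ℤ := cc * p n + dd * q n with hC
  set D : ℤ := cc * ps n + dd * qs n with hD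
  have hpsn : ps n = p (n-1) := by
    have := (hrec (K+1)).2.1
    rw [show K + 1 + 1 = n by omega, show K + 1 = n - 1 by omega] at this
    exact this
  have hqsn : qs n = q (n-1) := by
    have := (hrec (K+1)).2.2.2
    rw [show K + 1 + 1 = n by omega, show K + 1 = n - 1 by omega] at this
    exact this
  have hg1 := hgen (K+1) (by omega)
  rw [show K + 1 + 1 = n by omega] at hg1
  have hg0 := hgen K le_rfl
  rw [show K + 1 = n - 1 by omega] at hg0
  have hC1 : 1 ≤ C := by rw [hC]; exact hg1.1
  have hD1 : 1 ≤ D := by rw [hD, hpsn, hqsn]; exact hg0.1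
  have hCA : C ≤ A := by
    have h1 : A - C = (aa-cc) * p n + (bb-dd) * q n := by rw [hA, hC]; ring
    have := hg1.2
    omega
  have hDB : D ≤ B := by
    have h1 : B - D = (aa-cc) * ps n + (bb-dd) * qs n := by rw [hB, hD]; ring
    rw [hpsn, hqsn] at h1
    have := hg0.2
    omega
  have hdetAD : A*D - B*C = (-1:ℤ)^n := by
    have h1 : A*D - B*C = (aa*dd - bb*cc) * (p n * qs n - ps n * q n) := by
      rw [hA, hB, hC, hD]; ring
    rw [h1, hdet, hdetn n, one_mul]
  have det_or : A*D - B*C = 1 ∨ A*D - B*C = -1 := by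
    rcases neg_one_pow_eq_or ℤ n with h | h
    · left; rw [hdetAD, h]
    · right; rw [hdetAD, h]
  set z : ℝ := X n with hz
  have hz1 : 1 < z := hX1 n
  set w : ℝ := (q n:ℝ)*z + (qs n:ℝ) with hw
  have hw0 : 0 < w := hden n
  have hxw : x * w = (p n:ℝ)*z + (ps n:ℝ) := by
    rw [hw, hiden n, hz]; exact div_mul_cancel₀ _ (hden n).ne'
  have hCzD : 0 < (C:ℝ)*z + (D:ℝ) := by
    have h1 : (1:ℝ) ≤ (C:ℝ) := by exact_mod_cast hC1
    have h2 : (1:ℝ) ≤ (D:ℝ) := by exact_mod_cast hD1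
    nlinarith
  have h1 : (A:ℝ)*z + (B:ℝ) = ((aa:ℝ)*x + (bb:ℝ))*w := by
    rw [hA, hB]; push_cast
    linear_combination (-(aa:ℝ)) * hxw - (bb:ℝ) * hw
  have h2 : (C:ℝ)*z + (D:ℝ) = ((cc:ℝ)*x + (dd:ℝ))*w := by
    rw [hC, hD]; push_cast
    linear_combination (-(cc:ℝ)) * hxw - (dd:ℝ) * hw
  have heqy : y = ((A:ℝ)*z+(B:ℝ))/((C:ℝ)*z+(D:ℝ)) := by
    rw [eq_div_iff (ne_of_gt hCzD), h2, h1]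
    linear_combination w * hy2
  obtain ⟨j, hj⟩ := lemA (A+B).toNat A B C D le_rfl det_or hC1 (by omega) hCA hDB z hz1
  rw [← heqy] at hj
  rcases hj with hj | hj
  · exact ⟨j, n, by rw [hj]⟩
  · refine ⟨j, n+1, ?_⟩
    rw [hj, hXr n]

lemma common (x y : ℝ) (X : ℕ → ℝ) (hX0 : X 0 = x) (hXr : ∀ k : ℕ, X (k+1) = G (X k))
    (hX1 : ∀ k, 1 < X k)
    (aa bb cc dd : ℤ) (hdet : aa*dd - bb*cc = 1) (hy : 1 < y)
    (hm : y = ((aa:ℝ)*x + bb)/((cc:ℝ)*x + dd)) :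
    ∃ j n, G^[j] y = X n := by
  have hcd0 : ((cc:ℝ)*x + dd) ≠ 0 := by
    intro h0
    rw [h0, div_zero] at hm
    linarith
  rcases lt_or_gt_of_ne hcd0 with hneg | hpos
  · apply common_pos x y X hX0 hXr hX1 (-aa) (-bb) (-cc) (-dd)
      (by linear_combination hdet) hy
      (by push_cast; linarith)
      (by rw [hm]; push_cast
          rw [div_eq_div_iff hcd0 (by linarith)]
          ring)
  · exact common_pos x y X hX0 hXr hX1 aa bb cc dd hdet hy hpos hm
end B320


open B320 in
/-- Buell, Proposition 3.20: if `x = (√N + P) / Q` and `y = (√N + P') / Q'` are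
reduced quadratic surds for `N` and `y = (a x + b) / (c x + d)` with
`a d - b c = 1`, then `y` occurs as a complete quotient in the simple continued
fraction expansion of `x`, and `x` occurs as a complete quotient in the simple
continued fraction expansion of `y`. -/
theorem stmt_19 (N : ℤ) (hNpos : 0 < N) (hNsq : ¬ IsSquare N)
    (P Q P' Q' : ℤ) (hP : 0 < P) (hQ : 0 < Q) (hP' : 0 < P') (hQ' : 0 < Q')
    (hcong : Q ∣ P ^ 2 - N)
    (hPN : (P : ℝ) < Real.sqrt (N : ℝ))
    (hQred : |Real.sqrt (N : ℝ) - (Q : ℝ)| < (P : ℝ))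
    (hcong' : Q' ∣ P' ^ 2 - N)
    (hPN' : (P' : ℝ) < Real.sqrt (N : ℝ))
    (hQred' : |Real.sqrt (N : ℝ) - (Q' : ℝ)| < (P' : ℝ))
    (a b c d : ℤ) (hdet : a * d - b * c = 1)
    (hmoeb : (Real.sqrt (N : ℝ) + (P' : ℝ)) / (Q' : ℝ) =
      ((a : ℝ) * ((Real.sqrt (N : ℝ) + (P : ℝ)) / (Q : ℝ)) + (b : ℝ)) /
        ((c : ℝ) * ((Real.sqrt (N : ℝ) + (P : ℝ)) / (Q : ℝ)) + (d : ℝ)))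
    (X Y : ℕ → ℝ)
    (hX0 : X 0 = (Real.sqrt (N : ℝ) + (P : ℝ)) / (Q : ℝ))
    (hXr : ∀ k : ℕ, X (k + 1) = 1 / (X k - (⌊X k⌋ : ℝ)))
    (hY0 : Y 0 = (Real.sqrt (N : ℝ) + (P' : ℝ)) / (Q' : ℝ))
    (hYr : ∀ k : ℕ, Y (k + 1) = 1 / (Y k - (⌊Y k⌋ : ℝ))) :
    (∃ k : ℕ, X k = (Real.sqrt (N : ℝ) + (P' : ℝ)) / (Q' : ℝ)) ∧
    (∃ k : ℕ, Y k = (Real.sqrt (N : ℝ) + (P : ℝ)) / (Q : ℝ)) := by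
  set s : ℝ := Real.sqrt (N:ℝ) with hs
  have hN0 : (0:ℝ) ≤ (N:ℝ) := by exact_mod_cast hNpos.le
  have hs2 : s^2 = (N:ℝ) := Real.sq_sqrt hN0
  have hirr : Irrational s := irrational_sqrt_intCast_iff.mpr ⟨hNsq, hNpos.le⟩
  have hs0 : 0 ≤ s := Real.sqrt_nonneg _
  have hs1 : 1 ≤ s := by
    have h1 : (1:ℝ) ≤ (N:ℝ) := by exact_mod_cast hNpos
    nlinarith
  obtain ⟨hQ1, hQ2⟩ := abs_lt.mp hQred
  obtain ⟨hQ1', hQ2'⟩ := abs_lt.mp hQred'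
  have hRx : Red N s P Q := ⟨hP, hQ, hcong, hPN, by linarith, by linarith⟩
  have hRy : Red N s P' Q' := ⟨hP', hQ', hcong', hPN', by linarith, by linarith⟩
  set x : ℝ := (s + (P:ℝ))/(Q:ℝ) with hx
  set y : ℝ := (s + (P':ℝ))/(Q':ℝ) with hy
  have hXG : ∀ k : ℕ, X (k+1) = G (X k) := fun k => hXr k
  have hYG : ∀ k : ℕ, Y (k+1) = G (Y k) := fun k => hYr k
  obtain ⟨hX1, TX, hTX1, hTXper⟩ := red_periodic N s hs2 hirr hs1 hRx X hX0 hXG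
  obtain ⟨hY1, TY, hTY1, hTYper⟩ := red_periodic N s hs2 hirr hs1 hRy Y hY0 hYG
  have hy1 : 1 < y := red_one_lt N s hRy
  obtain ⟨j, n, hjn⟩ := common x y X hX0 hXG hX1 a b c d hdet hy1 hmoeb
  -- Y j = G^[j] y
  have hYit : ∀ j : ℕ, Y j = G^[j] y := by
    intro j
    induction j with
    | zero => simpa using hY0
    | succ j ih => rw [hYG j, ih, Function.iterate_succ_apply']
  have hYX : Y j = X n := by rw [hYit j, hjn]
  have shift : ∀ i : ℕ, Y (j+i) = X (n+i) := by
    intro i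
    induction i with
    | zero => simpa using hYX
    | succ i ih =>
      rw [show j + (i+1) = (j+i) + 1 by omega, show n + (i+1) = (n+i) + 1 by omega,
        hYG, hXG, ih]
  have hmulY : ∀ m k : ℕ, Y (k + m*TY) = Y k := by
    intro m
    induction m with
    | zero => simp
    | succ m ih =>
      intro k
      rw [show k + (m+1)*TY = (k + m*TY) + TY by ring, hTYper, ih]
  have hmulX : ∀ m k : ℕ, X (k + m*TX) = X k := by
    intro m
    induction m with
    | zero => simp
    | succ m ih =>
      intro k
      rw [show k + (m+1)*TX = (k + m*TX) + TX by ring, hTXper, ih]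
  constructor
  · refine ⟨n + j*(TY-1), ?_⟩
    have h1 : X (n + j*(TY-1)) = Y (j + j*(TY-1)) := (shift (j*(TY-1))).symm
    have h2 : j + j*(TY-1) = 0 + j*TY := by
      rcases Nat.exists_eq_add_of_le hTY1 with ⟨t, rfl⟩
      have h3 : 1 + t - 1 = t := by omega
      rw [h3]; ring
    rw [h1, h2, hmulY j 0, hY0]
  · refine ⟨j + n*(TX-1), ?_⟩
    have h1 : Y (j + n*(TX-1)) = X (n + n*(TX-1)) := shift (n*(TX-1))
    have h2 : n + n*(TX-1) = 0 + n*TX := by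
      rcases Nat.exists_eq_add_of_le hTX1 with ⟨t, rfl⟩
      have h3 : 1 + t - 1 = t := by omega
      rw [h3]; ring
    rw [h1, h2, hmulX n 0, hX0]
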